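/- Let A be a 4×4 normal idempotent matrix with a_{32} + a_{41} < a_{31} + a_{42}, q = column 2 of A, v¹³ = (-a_{41}, -a_{42}, a_{31}-a_{41}, 0) and v²⁴ = (-a_{31}, -a_{32}, 0, a_{42}-a_{32}). Then d(q, v²⁴) < d(q, v¹³), i.e., v²⁴ is the vertex closer to q; explicitly d(q, v¹³) = f_{14} = f_{13} + f_{34} > f_{13} = d(q, v²⁴). -/

import Mathlib

/-- Normalized difference: the zero-last-coordinate representative of `p - q`. -/
noncomputable def normDiff (n : ℕ) (p q : Fin (n+1) → ℝ) : Fin (n+1) → ℝ :=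
  fun i => (p i - q i) - (p (Fin.last n) - q (Fin.last n))

/-- The tropical distance on `ℝⁿ/ℝ(1,…,1)`. -/
noncomputable def tdist (n : ℕ) (p q : Fin (n+1) → ℝ) : ℝ :=
  Finset.univ.sup' Finset.univ_nonempty
    (fun ij : Fin (n+1) × Fin (n+1) =>
      max |normDiff n p q ij.1| |normDiff n p q ij.1 - normDiff n p q ij.2|)

/-!
The tropical distance of `p` and `q` is the spread `max (p - q) - min (p - q)`. In the paper's
1-based indices, subadditivity `a_{i1} + a_{12} ≤ a_{i2}` shows that both `q - v¹³` and
`q - v²⁴` are smallest in coordinate 1 and largest in coordinate 2; reading off the spreads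
gives `f_{14}` and `f_{13}`. Their difference `f_{34}` is positive exactly by the type
condition `a_{32} + a_{41} < a_{31} + a_{42}`.
-/

theorem normDiff_sub_normDiff (n : ℕ) (p q : Fin (n+1) → ℝ) (i j : Fin (n+1)) :
    normDiff n p q i - normDiff n p q j = (p i - q i) - (p j - q j) := by
  simp only [normDiff]
  ring

theorem normDiff_last (n : ℕ) (p q : Fin (n+1) → ℝ) : normDiff n p q (Fin.last n) = 0 :=
  sub_self _

theorem tdist_eq_of_forall_mem_Icc {n : ℕ} {p q : Fin (n+1) → ℝ} {a b : Fin (n+1)}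
    (h : ∀ i, p i - q i ∈ Set.Icc (p a - q a) (p b - q b)) :
    tdist n p q = (p b - q b) - (p a - q a) := by
  have hspread : ∀ i j, |normDiff n p q i - normDiff n p q j| ≤ (p b - q b) - (p a - q a) := by
    intro i j
    obtain ⟨hi₁, hi₂⟩ := h i
    obtain ⟨hj₁, hj₂⟩ := h j
    rw [normDiff_sub_normDiff, abs_le]
    constructor <;> linarith
  apply le_antisymm
  · refine Finset.sup'_le _ _ fun ij _ => max_le ?_ (hspread _ _)
    simpa only [normDiff_last, sub_zero] using hspread ij.1 (Fin.last n)
  · calc (p b - q b) - (p a - q a) = |normDiff n p q b - normDiff n p q a| := by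
          rw [normDiff_sub_normDiff, abs_of_nonneg (sub_nonneg.2 (h a).2)]
      _ ≤ _ := le_max_right _ _
      _ ≤ tdist n p q := Finset.le_sup' (fun ij : Fin (n+1) × Fin (n+1) =>
            max |normDiff n p q ij.1| |normDiff n p q ij.1 - normDiff n p q ij.2|)
            (Finset.mem_univ (b, a))

theorem stmt14_general (A : Matrix (Fin 4) (Fin 4) ℝ)
    (hdiag : ∀ i, A i i = 0)
    (hsub : ∀ i j k, A i k + A k j ≤ A i j)
    (htype : A 2 1 + A 3 0 < A 2 0 + A 3 1) :
    let f : Fin 4 → Fin 4 → ℝ := fun k l => A k 0 + A l 1 - A k 1 - A l 0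
    let q : Fin 4 → ℝ := fun i => A i 1
    let v13 : Fin 4 → ℝ := ![-(A 3 0), -(A 3 1), A 2 0 - A 3 0, 0]
    let v24 : Fin 4 → ℝ := ![-(A 2 0), -(A 2 1), 0, A 3 1 - A 2 1]
    tdist 3 q v13 = f 0 3 ∧
    f 0 3 = f 0 2 + f 2 3 ∧
    tdist 3 q v24 = f 0 2 ∧
    f 0 2 < f 0 3 ∧
    tdist 3 q v24 < tdist 3 q v13 := by
  intro f q v13 v24
  have hsub₃ := hsub 3 1 0
  have hsub₂ := hsub 2 1 0
  have hd₀ := hdiag 0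
  have hd₁ := hdiag 1
  have hv13 : tdist 3 q v13 = f 0 3 := by
    rw [tdist_eq_of_forall_mem_Icc (a := 0) (b := 1)]
    · simp only [f, q, v13, hd₀, hd₁, Matrix.cons_val_zero, Matrix.cons_val_one]
      ring
    · intro i
      fin_cases i <;> simp [q, v13, hd₁] <;> and_intros <;> linarith
  have hv24 : tdist 3 q v24 = f 0 2 := by
    rw [tdist_eq_of_forall_mem_Icc (a := 0) (b := 1)]
    · simp only [f, q, v24, hd₀, hd₁, Matrix.cons_val_zero, Matrix.cons_val_one]
      ring
    · intro i
      fin_cases i <;> simp [q, v24, hd₁] <;> linarith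
  have hsplit : f 0 3 = f 0 2 + f 2 3 := by simp only [f]; ring
  have hcloser : f 0 2 < f 0 3 := by simp only [f]; linarith
  exact ⟨hv13, hsplit, hv24, hcloser, hv24 ▸ hv13 ▸ hcloser⟩

/-- For a 4×4 normal idempotent matrix with `a_{32}+a_{41} < a_{31}+a_{42}`,
the vertex `v²⁴` is strictly closer to `q` (column 2) than `v¹³`:
`d(q,v¹³) = f_{14} = f_{13} + f_{34} > f_{13} = d(q,v²⁴)`. -/
theorem stmt14 (A : Matrix (Fin 4) (Fin 4) ℝ)
    (hdiag : ∀ i, A i i = 0) (hneg : ∀ i j, A i j ≤ 0)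
    (hsub : ∀ i j k, A i k + A k j ≤ A i j)
    (htype : A 2 1 + A 3 0 < A 2 0 + A 3 1) :
    let f : Fin 4 → Fin 4 → ℝ := fun k l => A k 0 + A l 1 - A k 1 - A l 0
    let q : Fin 4 → ℝ := fun i => A i 1
    let v13 : Fin 4 → ℝ := ![-(A 3 0), -(A 3 1), A 2 0 - A 3 0, 0]
    let v24 : Fin 4 → ℝ := ![-(A 2 0), -(A 2 1), 0, A 3 1 - A 2 1]
    tdist 3 q v13 = f 0 3 ∧
    f 0 3 = f 0 2 + f 2 3 ∧
    tdist 3 q v24 = f 0 2 ∧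
    f 0 2 < f 0 3 ∧
    tdist 3 q v24 < tdist 3 q v13 :=
  stmt14_general A hdiag hsub htype
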